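/- Let n ≥ 1 and let B, C, D : ℝ → Mₙ(ℝ) with C(s) symmetric for every s. Let H : ℝ → Mₙ(ℂ) be differentiable, with H(s) symmetric and Im H(s) positive definite for every s, with H(0) = i·Idₙ, and satisfying the matrix Riccati equation H′(s) + H(s)C(s)H(s) + B(s)H(s) + H(s)B(s)ᵀ + D(s) = 0 for all s. Let x, ξ : ℝ → ℝⁿ be twice differentiable with x″ = Bᵀx′ + Cξ′ and ξ″ = −Dx′ − Bξ′ on ℝ. For s ∈ ℝ define the (n+1)×(n+1) complex block matrix M(s) = [[2i·Im H(s), ξ′(s) − H(s)·x′(s)], [(ξ′(s) − H(s)·x′(s))ᵀ, (H(s)·x′(s) − ξ′(s))·x′(s)]]. Then for every s ∈ ℝ, det M(s) = (i/2)·(2i)ⁿ·(‖x′(0)‖² + ‖ξ′(0)‖²)·det(Im H(s)), where ‖·‖ is the Euclidean norm on ℝⁿ and det(Im H(s)) is regarded as a complex number. In particular, if (x′(0), ξ′(0)) ≠ (0,0) then M(s) is invertible for every s. -/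

import Mathlib

/-!
The upper left block of `M(s)` is `W = 2i·Im H = H - H̄`, which is invertible, and the other blocks
are bordered by `u = ξ' - H x'`, so `det M = det W · S` with the Schur complement
`S = -(u·x') - u·W⁻¹u`. Along the Riccati flow, `u' = -(B + HC) u` and
`W' = -((B + HC) W + W (CH̄ + Bᵀ))`; the symmetry of `H` and `C` then makes `S' = 0`.
At `s = 0`, `W = 2i` and `S = (i/2)(|x'(0)|² + |ξ'(0)|²)`.
-/

open Matrix Complex ComplexConjugate

theorem Matrix.det_fromBlocks_replicateCol_replicateRow {m ι α : Type*} [Fintype m]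
    [DecidableEq m] [Unique ι] [CommRing α] (A : Matrix m m α) (hA : IsUnit A.det)
    (u v : m → α) (d : α) :
    (fromBlocks A (replicateCol ι u) (replicateRow ι v) (of fun _ _ => d)).det =
      A.det * (d - v ⬝ᵥ A⁻¹ *ᵥ u) := by
  let := A.invertibleOfIsUnitDet hA
  rw [det_fromBlocks₁₁, det_unique (n := ι), invOf_eq_nonsing_inv, Matrix.mul_assoc,
    ← replicateCol_mulVec, replicateRow_mul_replicateCol]
  rfl

theorem Matrix.sub_map_conj_eq {m n : Type*} (H : Matrix m n ℂ) :
    H - H.map conj = of fun i j => 2 * I * ((H i j).im : ℂ) := by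
  ext i j
  simp only [Matrix.sub_apply, map_apply, of_apply, sub_conj]
  push_cast
  ring

section Algebra

variable {m : Type*} [Fintype m]

theorem Matrix.det_sub_map_conj [DecidableEq m] (H : Matrix m m ℂ) :
    (H - H.map conj).det = (2 * I) ^ Fintype.card m * ((H.map im).det : ℂ) := by
  have h : H - H.map conj = (2 * I) • ofRealHom.mapMatrix (H.map im) := by
    rw [sub_map_conj_eq]; ext; simp
  rw [h, det_smul, ← RingHom.map_det]
  rfl

theorem sum_sq_add_sum_sq_ne_zero {p q : m → ℝ} (h : ¬(p = 0 ∧ q = 0)) :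
    ∑ i, p i ^ 2 + ∑ i, q i ^ 2 ≠ 0 := by
  have hsq (v : m → ℝ) : ∑ i, v i ^ 2 = 0 ↔ v = 0 := by
    rw [Fintype.sum_eq_zero_iff_of_nonneg fun i => sq_nonneg (v i)]
    simp [funext_iff]
  rwa [Ne, add_eq_zero_iff_of_nonneg (by positivity) (by positivity), hsq, hsq]

theorem sub_mulVec_deriv_of_riccati {R : Type*} [CommRing R] {H H' B C D : Matrix m m R}
    {p q p' q' : m → R} (hR : H' + H * C * H + B * H + H * Bᵀ + D = 0)
    (hp : p' = Bᵀ *ᵥ p + C *ᵥ q) (hq : q' = -(D *ᵥ p) - B *ᵥ q) :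
    q' - (H' *ᵥ p + H *ᵥ p') = -((B + H * C) *ᵥ (q - H *ᵥ p)) := by
  rw [eq_neg_of_add_eq_zero_left (by rw [← hR]; abel : H' + (H * C * H + B * H + H * Bᵀ + D) = 0),
    hp, hq]
  simp only [← mulVec_mulVec, add_mulVec, neg_mulVec, mulVec_add, mulVec_sub]
  abel

theorem sub_map_conj_deriv_of_riccati {H H' : Matrix m m ℂ} {B C D : Matrix m m ℝ}
    (hR : H' + H * C.map (↑) * H + B.map (↑) * H + H * (B.map (↑))ᵀ + D.map (↑) = 0) :
    H' - H'.map conj = -((B.map (↑) + H * C.map (↑)) * (H - H.map conj)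
      + (H - H.map conj) * (C.map (↑) * H.map conj + (B.map (↑))ᵀ)) := by
  have hreal : ∀ A : Matrix m m ℝ, (A.map ((↑) : ℝ → ℂ)).map conj = A.map (↑) := fun A => by
    ext; simp
  have hR' := congrArg (·.map conj) hR
  beta_reduce at hR'
  simp only [Matrix.map_add _ (map_add (starRingEnd ℂ)), Matrix.map_mul, hreal, transpose_map,
    Matrix.map_zero _ (map_zero (starRingEnd ℂ))] at hR'
  rw [eq_neg_of_add_eq_zero_left (by rw [← hR']; abel : H'.map conj + (H.map conj * C.map (↑) *
      H.map conj + B.map (↑) * H.map conj + H.map conj * (B.map (↑))ᵀ + D.map (↑)) = 0),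
    eq_neg_of_add_eq_zero_left (by rw [← hR]; abel : H' + (H * C.map (↑) * H + B.map (↑) * H
      + H * (B.map (↑))ᵀ + D.map (↑)) = 0)]
  noncomm_ring

-- Applied with `W = H - H̄`, `u = q - H p`, `P = B + H C`, `Q = C H̄ + Bᵀ` and `K = C`.
theorem schur_deriv_eq_zero {R : Type*} [CommRing R] [DecidableEq m] {P Q W W' K : Matrix m m R}
    {u u' p p' : m → R} (hW : IsUnit W.det) (hu : u' = -(P *ᵥ u)) (hW' : W' = -(P * W + W * Q))
    (hPQ : Pᵀ - Q = K * W) (hp : Pᵀ *ᵥ p - p' = -(K *ᵥ u)) :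
    -(u' ⬝ᵥ p + u ⬝ᵥ p') - (u' ⬝ᵥ W⁻¹ *ᵥ u + u ⬝ᵥ (-(W⁻¹ * W' * W⁻¹) *ᵥ u + W⁻¹ *ᵥ u')) = 0 := by
  have hdot (A : Matrix m m R) (v w : m → R) : (A *ᵥ v) ⬝ᵥ w = v ⬝ᵥ Aᵀ *ᵥ w := by
    rw [dotProduct_comm, dotProduct_mulVec, dotProduct_comm, mulVec_transpose]
  have hinv_deriv : -(W⁻¹ * W' * W⁻¹) = W⁻¹ * P + Q * W⁻¹ := by
    calc -(W⁻¹ * W' * W⁻¹) = W⁻¹ * P * (W * W⁻¹) + (W⁻¹ * W) * Q * W⁻¹ := by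
          rw [hW']; noncomm_ring
      _ = W⁻¹ * P + Q * W⁻¹ := by rw [mul_nonsing_inv W hW, nonsing_inv_mul W hW]; simp
  have h1 : -(u' ⬝ᵥ p + u ⬝ᵥ p') = -(u ⬝ᵥ K *ᵥ u) := by
    rw [hu, neg_dotProduct, hdot, neg_add', neg_neg, ← dotProduct_sub, hp, dotProduct_neg]
  have h2 : u' ⬝ᵥ W⁻¹ *ᵥ u + u ⬝ᵥ (-(W⁻¹ * W' * W⁻¹) *ᵥ u + W⁻¹ *ᵥ u') = -(u ⬝ᵥ K *ᵥ u) := by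
    calc _ = -(u ⬝ᵥ ((Pᵀ - Q) * W⁻¹) *ᵥ u) := by
          rw [hinv_deriv, hu, neg_dotProduct, hdot]
          simp only [sub_mul, sub_mulVec, add_mulVec, mulVec_neg, dotProduct_add, dotProduct_sub,
            dotProduct_neg, mulVec_mulVec]
          ring
      _ = -(u ⬝ᵥ K *ᵥ u) := by rw [hPQ, Matrix.mul_assoc, mul_nonsing_inv W hW, Matrix.mul_one]
  rw [h1, h2, sub_neg_eq_add, neg_add_cancel]

/-- The Schur complement of the upper left block `H - H̄` in the bordered matrix
`[[H - H̄, u], [uᵀ, -u ⬝ᵥ p]]`, where `u = q - H p`. -/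
noncomputable def schurComplement [DecidableEq m] (H : Matrix m m ℂ) (p q : m → ℂ) : ℂ :=
  -((q - H *ᵥ p) ⬝ᵥ p) - (q - H *ᵥ p) ⬝ᵥ (H - H.map conj)⁻¹ *ᵥ (q - H *ᵥ p)

theorem schurComplement_I_smul_one [DecidableEq m] (p q : m → ℝ) :
    schurComplement (I • 1) (fun i => (p i : ℂ)) (fun i => (q i : ℂ)) =
      I / 2 * ((∑ i, p i ^ 2 + ∑ i, q i ^ 2 : ℝ) : ℂ) := by
  have hW : (I • 1 : Matrix m m ℂ) - (I • 1 : Matrix m m ℂ).map conj = (2 * I) • 1 := by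
    ext i j; by_cases h : i = j <;> simp [one_apply, h]; ring
  have hWinv : ((2 * I) • 1 : Matrix m m ℂ)⁻¹ = (-(I / 2)) • 1 := by
    have h : -(I / 2) * (2 * I) = 1 := by linear_combination -I_sq
    refine inv_eq_left_inv ?_
    rw [smul_mul_smul_comm, Matrix.one_mul, h, one_smul]
  rw [schurComplement, hW, hWinv]
  simp only [dotProduct, smul_mulVec, one_mulVec, Pi.smul_apply, Pi.sub_apply, smul_eq_mul]
  push_cast
  rw [mul_add, Finset.mul_sum, Finset.mul_sum, ← Finset.sum_add_distrib, ← Finset.sum_neg_distrib,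
    ← Finset.sum_sub_distrib]
  refine Finset.sum_congr rfl fun i _ => ?_
  linear_combination (I / 2 * (p i : ℂ) ^ 2 - q i * p i) * I_sq

end Algebra

section Calculus

-- `HasDerivAt` does not depend on the choice among equivalent norms; the operator norm makes
-- matrices a normed algebra, where the derivative of the inverse is available.
attribute [local instance] Matrix.linftyOpNormedAddCommGroup Matrix.linftyOpNormedSpace
  Matrix.linftyOpNormedRing Matrix.linftyOpNormedAlgebra

variable {m n 𝕜 : Type*} [Fintype m] [Fintype n] [RCLike 𝕜] {t : ℝ}

theorem Matrix.hasDerivAt_iff {A : ℝ → Matrix m n 𝕜} {A' : Matrix m n 𝕜} :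
    HasDerivAt A A' t ↔ ∀ i j, HasDerivAt (fun s => A s i j) (A' i j) t := by
  let e : (m → n → 𝕜) ≃L[ℝ] Matrix m n 𝕜 := (ofLinearEquiv ℝ).toContinuousLinearEquiv
  refine ⟨fun h i j => ?_, fun h => ?_⟩
  · exact hasDerivAt_pi.1 (hasDerivAt_pi.1 (e.symm.hasFDerivAt.comp_hasDerivAt t h) i) j
  · exact e.hasFDerivAt.comp_hasDerivAt t (hasDerivAt_pi.2 fun i => hasDerivAt_pi.2 (h i))

theorem HasDerivAt.dotProduct {u v : ℝ → m → 𝕜} {u' v' : m → 𝕜} (hu : HasDerivAt u u' t)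
    (hv : HasDerivAt v v' t) :
    HasDerivAt (fun s => u s ⬝ᵥ v s) (u' ⬝ᵥ v t + u t ⬝ᵥ v') t := by
  rw [hasDerivAt_pi] at hu hv
  exact (HasDerivAt.fun_sum (u := Finset.univ) fun i _ => (hu i).mul (hv i)).congr_deriv
    (Finset.sum_add_distrib.trans rfl)

theorem HasDerivAt.mulVec {A : ℝ → Matrix m n 𝕜} {A' : Matrix m n 𝕜} {v : ℝ → n → 𝕜}
    {v' : n → 𝕜} (hA : HasDerivAt A A' t) (hv : HasDerivAt v v' t) :
    HasDerivAt (fun s => A s *ᵥ v s) (A' *ᵥ v t + A t *ᵥ v') t := by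
  rw [Matrix.hasDerivAt_iff] at hA
  exact hasDerivAt_pi.2 fun i => (hasDerivAt_pi (φ := fun s => A s i) |>.2 (hA i)).dotProduct hv

theorem HasDerivAt.matrix_inv [DecidableEq m] {A : ℝ → Matrix m m 𝕜} {A' : Matrix m m 𝕜}
    (hA : HasDerivAt A A' t) (h : IsUnit (A t).det) :
    HasDerivAt (fun s => (A s)⁻¹) (-((A t)⁻¹ * A' * (A t)⁻¹)) t := by
  obtain ⟨u, hu⟩ := (A t).isUnit_iff_isUnit_det.2 h
  have hinv : HasFDerivAt Ring.inverse _ (A t) := hu ▸ hasFDerivAt_ringInverse (𝕜 := ℝ) u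
  simp only [nonsing_inv_eq_ringInverse]
  refine (hinv.comp_hasDerivAt t hA).congr_deriv ?_
  simp [← hu]

theorem HasDerivAt.matrix_map_conj {A : ℝ → Matrix m n 𝕜} {A' : Matrix m n 𝕜}
    (hA : HasDerivAt A A' t) : HasDerivAt (fun s => (A s).map conj) (A'.map conj) t :=
  Matrix.hasDerivAt_iff.2 fun i j => (Matrix.hasDerivAt_iff.1 hA i j).star

theorem hasDerivAt_schurComplement [DecidableEq m] {H : ℝ → Matrix m m ℂ} {H' : Matrix m m ℂ}
    {p q : ℝ → m → ℂ} {p' q' : m → ℂ} {B C D : Matrix m m ℝ} (hH : HasDerivAt H H' t)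
    (hp : HasDerivAt p p' t) (hq : HasDerivAt q q' t) (hHs : (H t).IsSymm) (hCs : C.IsSymm)
    (hW : IsUnit (H t - (H t).map conj).det)
    (hR : H' + H t * C.map (↑) * H t + B.map (↑) * H t + H t * (B.map (↑))ᵀ + D.map (↑) = 0)
    (hp' : p' = (B.map (↑))ᵀ *ᵥ p t + C.map (↑) *ᵥ q t)
    (hq' : q' = -(D.map (↑) *ᵥ p t) - B.map (↑) *ᵥ q t) :
    HasDerivAt (fun s => schurComplement (H s) (p s) (q s)) 0 t := by
  have hu := hq.fun_sub (hH.mulVec hp)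
  have hWinv := (hH.fun_sub hH.matrix_map_conj).matrix_inv hW
  have hCs' : (C.map ((↑) : ℝ → ℂ))ᵀ = C.map (↑) := by rw [← transpose_map, hCs]
  refine ((hu.dotProduct hp).fun_neg.fun_sub (hu.dotProduct (hWinv.mulVec hu))).congr_deriv ?_
  refine schur_deriv_eq_zero (K := C.map (↑)) hW (sub_mulVec_deriv_of_riccati hR hp' hq')
    (sub_map_conj_deriv_of_riccati hR) ?_ ?_
  · rw [transpose_add, transpose_mul, hCs', hHs]
    noncomm_ring
  · rw [hp', transpose_add, transpose_mul, hCs', hHs]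
    simp only [add_mulVec, mulVec_sub, ← mulVec_mulVec]
    abel

theorem schurComplement_eq_of_riccati [DecidableEq m] {H H' : ℝ → Matrix m m ℂ}
    {p q p' q' : ℝ → m → ℂ} {B C D : ℝ → Matrix m m ℝ}
    (hH : ∀ t i j, HasDerivAt (fun s => H s i j) (H' t i j) t)
    (hp : ∀ t, HasDerivAt p (p' t) t) (hq : ∀ t, HasDerivAt q (q' t) t)
    (hHs : ∀ t, (H t).IsSymm) (hCs : ∀ t, (C t).IsSymm)
    (hW : ∀ t, IsUnit (H t - (H t).map conj).det)
    (hR : ∀ t, H' t + H t * (C t).map (↑) * H t + (B t).map (↑) * H t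
      + H t * ((B t).map (↑))ᵀ + (D t).map (↑) = 0)
    (hp' : ∀ t, p' t = ((B t).map (↑))ᵀ *ᵥ p t + (C t).map (↑) *ᵥ q t)
    (hq' : ∀ t, q' t = -((D t).map (↑) *ᵥ p t) - (B t).map (↑) *ᵥ q t) (s : ℝ) :
    schurComplement (H s) (p s) (q s) = schurComplement (H 0) (p 0) (q 0) := by
  have hS t := hasDerivAt_schurComplement (Matrix.hasDerivAt_iff.2 (hH t)) (hp t) (hq t) (hHs t)
    (hCs t) (hW t) (hR t) (hp' t) (hq' t)
  exact is_const_of_deriv_eq_zero (fun t => (hS t).differentiableAt) (fun t => (hS t).deriv) s 0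

end Calculus

theorem det_M_formula_general (n : ℕ)
    (B C D : ℝ → Matrix (Fin n) (Fin n) ℝ) (hCsymm : ∀ s, (C s).IsSymm)
    (H H' : ℝ → Matrix (Fin n) (Fin n) ℂ)
    (hHd : ∀ s, ∀ i j, HasDerivAt (fun t => H t i j) (H' s i j) s)
    (hHsymm : ∀ s, (H s).IsSymm)
    (hHpos : ∀ s, (Matrix.of fun i j => (H s i j).im : Matrix (Fin n) (Fin n) ℝ).PosDef)
    (hH0 : H 0 = Complex.I • (1 : Matrix (Fin n) (Fin n) ℂ))
    (hRic : ∀ s, H' s + H s * (C s).map (Complex.ofReal) * H s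
        + (B s).map (Complex.ofReal) * H s
        + H s * ((B s).map (Complex.ofReal))ᵀ
        + (D s).map (Complex.ofReal) = 0)
    (x' ξ' x'' ξ'' : ℝ → Fin n → ℝ)
    (hx' : ∀ s, HasDerivAt x' (x'' s) s)
    (hξ' : ∀ s, HasDerivAt ξ' (ξ'' s) s)
    (hxeq : ∀ s, x'' s = (B s)ᵀ.mulVec (x' s) + (C s).mulVec (ξ' s))
    (hξeq : ∀ s, ξ'' s = -((D s).mulVec (x' s)) - (B s).mulVec (ξ' s))
    (M : ℝ → Matrix (Fin n ⊕ Unit) (Fin n ⊕ Unit) ℂ)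
    (hM : ∀ s, M s = Matrix.fromBlocks
        (Matrix.of fun i j => 2 * Complex.I * ((H s i j).im : ℂ))
        (Matrix.of fun i (_ : Unit) =>
          (ξ' s i : ℂ) - (H s).mulVec (fun j => (x' s j : ℂ)) i)
        (Matrix.of fun (_ : Unit) j =>
          (ξ' s j : ℂ) - (H s).mulVec (fun k => (x' s k : ℂ)) j)
        (Matrix.of fun (_ : Unit) (_ : Unit) =>
          ((H s).mulVec (fun j => (x' s j : ℂ)) - fun i => (ξ' s i : ℂ))
            ⬝ᵥ (fun j => (x' s j : ℂ)))) :
    (∀ s : ℝ, (M s).det = (Complex.I / 2) * (2 * Complex.I) ^ n *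
        (((∑ i, (x' 0 i) ^ 2 + ∑ i, (ξ' 0 i) ^ 2 : ℝ)) : ℂ) *
        (((Matrix.of fun i j => (H s i j).im : Matrix (Fin n) (Fin n) ℝ).det : ℝ) : ℂ)) ∧
      ((¬ (x' 0 = 0 ∧ ξ' 0 = 0)) → ∀ s : ℝ, IsUnit (M s)) := by
  have hdetW s : (H s - (H s).map conj).det =
      (2 * I) ^ n * ((of fun i j => (H s i j).im : Matrix (Fin n) (Fin n) ℝ).det : ℂ) := by
    rw [det_sub_map_conj, Fintype.card_fin]
    rfl
  have hW s : IsUnit (H s - (H s).map conj).det := by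
    rw [hdetW, isUnit_iff_ne_zero]
    exact mul_ne_zero (by simp) (ofReal_ne_zero.2 (hHpos s).det_pos.ne')
  have hcomplexify (v v' : ℝ → Fin n → ℝ) (hv : ∀ s, HasDerivAt v (v' s) s) (s : ℝ) :
      HasDerivAt (fun t i => (v t i : ℂ)) (fun i => (v' s i : ℂ)) s :=
    hasDerivAt_pi.2 fun i => (hasDerivAt_pi.1 (hv s) i).ofReal_comp
  have hS s : schurComplement (H s) (fun i => (x' s i : ℂ)) (fun i => (ξ' s i : ℂ)) =
      I / 2 * ((∑ i, x' 0 i ^ 2 + ∑ i, ξ' 0 i ^ 2 : ℝ) : ℂ) := by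
    rw [schurComplement_eq_of_riccati hHd (hcomplexify x' x'' hx') (hcomplexify ξ' ξ'' hξ')
      hHsymm hCsymm hW hRic (fun t => ?_) (fun t => ?_) s, hH0, schurComplement_I_smul_one]
    · ext i; simp [hxeq, mulVec, dotProduct]
    · ext i; simp [hξeq, mulVec, dotProduct]
  have hdetM s : (M s).det = (H s - (H s).map conj).det *
      schurComplement (H s) (fun i => (x' s i : ℂ)) (fun i => (ξ' s i : ℂ)) := by
    rw [hM s, ← sub_map_conj_eq, schurComplement, ← neg_dotProduct, neg_sub]
    exact det_fromBlocks_replicateCol_replicateRow _ (hW s) _ _ _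
  refine ⟨fun s => by rw [hdetM, hdetW, hS]; ring, fun hne s => ?_⟩
  rw [isUnit_iff_isUnit_det, hdetM, hS]
  exact (hW s).mul (isUnit_iff_ne_zero.2 (mul_ne_zero (by simp)
    (ofReal_ne_zero.2 (sum_sq_add_sum_sq_ne_zero hne))))

/-- The determinant formula `det M(s) = (i/2)(2i)ⁿ(|x′(0)|² + |ξ′(0)|²)
det(Im H(s))` for the Hessian block matrix
`M(s) = [[2i·Im H(s), ξ′ − H·x′], [(ξ′ − H·x′)ᵀ, (H·x′ − ξ′)·x′]]`
(Step 8 of the quasimode construction); in particular `M(s)` is invertible whenever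
`(x′(0), ξ′(0)) ≠ (0,0)`. -/
theorem det_M_formula (n : ℕ) (hn : 1 ≤ n)
    (B C D : ℝ → Matrix (Fin n) (Fin n) ℝ) (hCsymm : ∀ s, (C s).IsSymm)
    (H H' : ℝ → Matrix (Fin n) (Fin n) ℂ)
    (hHd : ∀ s, ∀ i j, HasDerivAt (fun t => H t i j) (H' s i j) s)
    (hHsymm : ∀ s, (H s).IsSymm)
    (hHpos : ∀ s, (Matrix.of fun i j => (H s i j).im : Matrix (Fin n) (Fin n) ℝ).PosDef)
    (hH0 : H 0 = Complex.I • (1 : Matrix (Fin n) (Fin n) ℂ))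
    (hRic : ∀ s, H' s + H s * (C s).map (Complex.ofReal) * H s
        + (B s).map (Complex.ofReal) * H s
        + H s * ((B s).map (Complex.ofReal))ᵀ
        + (D s).map (Complex.ofReal) = 0)
    (x ξ x' ξ' x'' ξ'' : ℝ → Fin n → ℝ)
    (hx : ∀ s, HasDerivAt x (x' s) s)
    (hx' : ∀ s, HasDerivAt x' (x'' s) s)
    (hξ : ∀ s, HasDerivAt ξ (ξ' s) s)
    (hξ' : ∀ s, HasDerivAt ξ' (ξ'' s) s)
    (hxeq : ∀ s, x'' s = (B s)ᵀ.mulVec (x' s) + (C s).mulVec (ξ' s))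
    (hξeq : ∀ s, ξ'' s = -((D s).mulVec (x' s)) - (B s).mulVec (ξ' s))
    (M : ℝ → Matrix (Fin n ⊕ Unit) (Fin n ⊕ Unit) ℂ)
    (hM : ∀ s, M s = Matrix.fromBlocks
        (Matrix.of fun i j => 2 * Complex.I * ((H s i j).im : ℂ))
        (Matrix.of fun i (_ : Unit) =>
          (ξ' s i : ℂ) - (H s).mulVec (fun j => (x' s j : ℂ)) i)
        (Matrix.of fun (_ : Unit) j =>
          (ξ' s j : ℂ) - (H s).mulVec (fun k => (x' s k : ℂ)) j)
        (Matrix.of fun (_ : Unit) (_ : Unit) =>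
          ((H s).mulVec (fun j => (x' s j : ℂ)) - fun i => (ξ' s i : ℂ))
            ⬝ᵥ (fun j => (x' s j : ℂ)))) :
    (∀ s : ℝ, (M s).det = (Complex.I / 2) * (2 * Complex.I) ^ n *
        (((∑ i, (x' 0 i) ^ 2 + ∑ i, (ξ' 0 i) ^ 2 : ℝ)) : ℂ) *
        (((Matrix.of fun i j => (H s i j).im : Matrix (Fin n) (Fin n) ℝ).det : ℝ) : ℂ)) ∧
      ((¬ (x' 0 = 0 ∧ ξ' 0 = 0)) → ∀ s : ℝ, IsUnit (M s)) :=
  det_M_formula_general n B C D hCsymm H H' hHd hHsymm hHpos hH0 hRic x' ξ' x'' ξ'' hx' hξ' hxeq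
    hξeq M hM
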